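/- Let K be a measurable space, F a real normed vector space, f ↦ ν_f an energy-measure assignment on (F, K), and ν a minimal energy-dominant measure. Let (f_i)_{i∈ℕ} be a sequence in F whose linear span is dense in F, and define p(x) := sup_{N∈ℕ} rank ((dν_{f_i,f_j}/dν)(x))_{i,j≤N}. Then p(x) ≥ 1 for ν-a.e. x ∈ K. -/

import Mathlib

/-!
Let `A` be the set where all densities `dν_{f_i,f_j}/dν` vanish. Then `ν_{u,v}(A) = 0` for
`u, v` in the span of the `f_i` by bilinearity, so `ν_u(A) = ν_{u,u}(A) = 0` there; since
`u ↦ √ν_u(A)` is Lipschitz by (b) and the span is dense, `ν_g(A) = 0` for every `g`. Hence all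
energy measures live on `Aᶜ`, so `ν|_{Aᶜ}` is energy-dominant and minimality gives `ν(A) = 0`.
Off `A` some entry `Z i j x` is nonzero, so the `N × N` matrix with `N > i, j` has rank `≥ 1`.
-/

open MeasureTheory

/-- The mutual measure value `ν_{f,g}(B) := (ν_{f+g}(B) − ν_f(B) − ν_g(B))/2`. -/
noncomputable def mutualEM {F K : Type*} [MeasurableSpace K] [Add F]
    (em : F → Measure K) (f g : F) (B : Set K) : ℝ :=
  ((em (f + g) B).toReal - (em f B).toReal - (em g B).toReal) / 2

/-- An energy-measure assignment on `(F, K)`: each `f : F` is assigned a finite measure `ν_f`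
on `K` such that (a) for every measurable `B`, `(f, g) ↦ ν_{f,g}(B)` is a (symmetric) bilinear
form on `F`, and (b) `(√(ν_f B) − √(ν_g B))² ≤ ν_{f−g}(B) ≤ 2‖f − g‖²` for all measurable `B`.
(Symmetry of the mutual form is automatic from its definition.) -/
structure EnergyMeasureAssignment (F K : Type*) [MeasurableSpace K]
    [NormedAddCommGroup F] [NormedSpace ℝ F] where
  em : F → Measure K
  finite : ∀ f, IsFiniteMeasure (em f)
  add_left : ∀ (f₁ f₂ g : F) (B : Set K), MeasurableSet B →
    mutualEM em (f₁ + f₂) g B = mutualEM em f₁ g B + mutualEM em f₂ g B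
  smul_left : ∀ (c : ℝ) (f g : F) (B : Set K), MeasurableSet B →
    mutualEM em (c • f) g B = c * mutualEM em f g B
  sqrt_diff_le : ∀ (f g : F) (B : Set K), MeasurableSet B →
    (Real.sqrt (em f B).toReal - Real.sqrt (em g B).toReal) ^ 2 ≤ (em (f - g) B).toReal
  le_norm : ∀ (f g : F) (B : Set K), MeasurableSet B →
    (em (f - g) B).toReal ≤ 2 * ‖f - g‖ ^ 2

/-- `ν` is a minimal energy-dominant measure: it is σ-finite, dominates every energy measure,
and is absolutely continuous with respect to any other σ-finite measure that does so. -/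
def IsMinimalEnergyDominant {F K : Type*} [MeasurableSpace K]
    [NormedAddCommGroup F] [NormedSpace ℝ F]
    (E : EnergyMeasureAssignment F K) (ν : Measure K) : Prop :=
  SigmaFinite ν ∧ (∀ f, E.em f ≪ ν) ∧
    ∀ ν' : Measure K, SigmaFinite ν' → (∀ f, E.em f ≪ ν') → ν ≪ ν'

lemma mutualEM_comm {F K : Type*} [MeasurableSpace K] [AddCommMagma F] (em : F → Measure K)
    (f g : F) (B : Set K) : mutualEM em f g B = mutualEM em g f B := by
  unfold mutualEM
  rw [add_comm f g]
  ring

namespace EnergyMeasureAssignment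

variable {F K : Type*} [MeasurableSpace K] [NormedAddCommGroup F] [NormedSpace ℝ F]
  (E : EnergyMeasureAssignment F K) {B : Set K}

lemma em_zero_apply (hB : MeasurableSet B) : (E.em 0 B).toReal = 0 := by
  have h := E.le_norm 0 0 B hB
  rw [sub_zero, norm_zero] at h
  exact le_antisymm (by simpa using h) ENNReal.toReal_nonneg

lemma em_apply_le_em_neg_apply (hB : MeasurableSet B) (f : F) :
    (E.em f B).toReal ≤ (E.em (-f) B).toReal := by
  have h := E.sqrt_diff_le 0 f B hB
  rwa [E.em_zero_apply hB, Real.sqrt_zero, zero_sub, neg_sq,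
    Real.sq_sqrt ENNReal.toReal_nonneg, zero_sub] at h

lemma em_neg_apply (hB : MeasurableSet B) (f : F) :
    (E.em (-f) B).toReal = (E.em f B).toReal :=
  le_antisymm (by simpa using E.em_apply_le_em_neg_apply hB (-f))
    (E.em_apply_le_em_neg_apply hB f)

noncomputable def mutualForm (hB : MeasurableSet B) : F →ₗ[ℝ] F →ₗ[ℝ] ℝ :=
  LinearMap.mk₂ ℝ (fun f g => mutualEM E.em f g B)
    (fun f₁ f₂ g => E.add_left f₁ f₂ g B hB)
    (fun c f g => E.smul_left c f g B hB)
    (fun f g₁ g₂ => by simp only [mutualEM_comm E.em f, E.add_left g₁ g₂ f B hB])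
    (fun c f g => by simp only [mutualEM_comm E.em f, E.smul_left c g f B hB, smul_eq_mul])

/-- Evenness of `f ↦ ν_f(B)` rules out a linear summand, so `ν_f(B)` is the diagonal of the
form. -/
lemma mutualEM_self (hB : MeasurableSet B) (f : F) :
    mutualEM E.em f f B = (E.em f B).toReal := by
  have h := E.smul_left (-1) f f B hB
  rw [neg_one_smul, mutualEM_comm E.em] at h
  unfold mutualEM at h ⊢
  rw [add_neg_cancel, E.em_zero_apply hB, E.em_neg_apply hB] at h
  linarith

lemma mutualEM_eq_zero_of_mem_span (hB : MeasurableSet B) {S : Set F}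
    (hS : ∀ u ∈ S, ∀ v ∈ S, mutualEM E.em u v B = 0) {u v : F}
    (hu : u ∈ Submodule.span ℝ S) (hv : v ∈ Submodule.span ℝ S) :
    mutualEM E.em u v B = 0 := by
  have hleft : ∀ w ∈ S, E.mutualForm hB u w = 0 := fun w hw =>
    LinearMap.eqOn_span (f := (E.mutualForm hB).flip w) (g := 0)
      (fun u' hu' => hS u' hu' w hw) hu
  exact LinearMap.eqOn_span (f := E.mutualForm hB u) (g := 0) hleft hv

/-- Property (b) makes `f ↦ √ν_f(B)` `√2`-Lipschitz. -/
lemma continuous_sqrt_em_apply (hB : MeasurableSet B) :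
    Continuous fun f => √(E.em f B).toReal := by
  refine (LipschitzWith.of_dist_le' (K := √2) fun f g => ?_).continuous
  rw [Real.dist_eq, dist_eq_norm, ← Real.sqrt_sq (norm_nonneg _), ← Real.sqrt_mul zero_le_two,
    ← Real.sqrt_sq_eq_abs]
  exact Real.sqrt_le_sqrt ((E.sqrt_diff_le f g B hB).trans (E.le_norm f g B hB))

lemma em_apply_eq_zero_of_dense_span (hB : MeasurableSet B) {S : Set F}
    (hdense : Dense (Submodule.span ℝ S : Set F))
    (hS : ∀ u ∈ S, ∀ v ∈ S, mutualEM E.em u v B = 0) (f : F) : E.em f B = 0 := by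
  have hsqrt : (fun f => √(E.em f B).toReal) = fun _ => 0 :=
    Continuous.ext_on hdense (E.continuous_sqrt_em_apply hB) continuous_const fun u hu => by
      simp only [← E.mutualEM_self hB, E.mutualEM_eq_zero_of_mem_span hB hS hu hu,
        Real.sqrt_zero]
  have hf := congrFun hsqrt f
  rw [Real.sqrt_eq_zero ENNReal.toReal_nonneg, ENNReal.toReal_eq_zero_iff] at hf
  have := E.finite f
  exact hf.resolve_right (measure_ne_top _ _)

end EnergyMeasureAssignment

lemma IsMinimalEnergyDominant.measure_eq_zero {F K : Type*} [MeasurableSpace K]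
    [NormedAddCommGroup F] [NormedSpace ℝ F] {E : EnergyMeasureAssignment F K} {ν : Measure K}
    (hν : IsMinimalEnergyDominant E ν) {A : Set K} (hA : MeasurableSet A)
    (hEA : ∀ f, E.em f A = 0) : ν A = 0 := by
  obtain ⟨hσ, hdom, hmin⟩ := hν
  have hac : ν ≪ ν.restrict Aᶜ := hmin _ inferInstance fun f => by
    rw [← Measure.restrict_eq_self_of_ae_mem (μ := E.em f) (s := Aᶜ) (compl_mem_ae_iff.2 (hEA f))]
    exact (hdom f).restrict Aᶜ
  exact hac (by simp [Measure.restrict_apply hA])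

lemma Matrix.one_le_rank_of_ne_zero {m n R : Type*} [Fintype n] [Field R] {A : Matrix m n R}
    (hA : A ≠ 0) : 1 ≤ A.rank := by
  classical
  rw [Nat.one_le_iff_ne_zero, Matrix.rank, Ne, Submodule.finrank_eq_zero, LinearMap.range_eq_bot,
    ← Matrix.toLin'_apply', LinearEquiv.map_eq_zero_iff]
  exact hA

theorem stmt12_general {F K : Type*} [MeasurableSpace K] [NormedAddCommGroup F] [NormedSpace ℝ F]
    (E : EnergyMeasureAssignment F K) (ν : Measure K)
    (hν : IsMinimalEnergyDominant E ν)
    (f : ℕ → F) (hdense : Dense (Submodule.span ℝ (Set.range f) : Set F))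
    (Z : ℕ → ℕ → K → ℝ)
    (hZmeas : ∀ i j, Measurable (Z i j))
    (hZ : ∀ (i j : ℕ) (B : Set K), MeasurableSet B →
      mutualEM E.em (f i) (f j) B = ∫ x in B, Z i j x ∂ν) :
    ∀ᵐ x ∂ν, 1 ≤ ⨆ M : ℕ, ((Matrix.of fun i j : Fin M => Z i j x).rank : ℕ∞) := by
  set A : Set K := {x | ∀ i j, Z i j x = 0}
  have hA : MeasurableSet A := by
    simp only [A, Set.ofPred_forall]
    exact .iInter fun i => .iInter fun j => hZmeas i j (measurableSet_singleton 0)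
  have hEA : ∀ g, E.em g A = 0 := E.em_apply_eq_zero_of_dense_span hA hdense <| by
    rintro _ ⟨i, rfl⟩ _ ⟨j, rfl⟩
    rw [hZ i j A hA]
    exact setIntegral_eq_zero_of_forall_eq_zero fun x hx => hx i j
  filter_upwards [measure_eq_zero_iff_ae_notMem.1 (hν.measure_eq_zero hA hEA)] with x hx
  obtain ⟨i, j, hij⟩ : ∃ i j, Z i j x ≠ 0 := by simpa [A] using hx
  have hM : Matrix.of (fun a b : Fin (max i j + 1) => Z a b x) ≠ 0 := fun h =>
    hij (by simpa using congrFun₂ h ⟨i, by omega⟩ ⟨j, by omega⟩)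
  exact le_iSup_of_le (max i j + 1) (by exact_mod_cast Matrix.one_le_rank_of_ne_zero hM)

/-- Proposition 2.8 of the paper: the pointwise index
`p(x) = sup_N rank ((dν_{f_i,f_j}/dν)(x))_{i,j<N}` is at least `1` for ν-a.e. `x`. -/
theorem stmt12 {F K : Type*} [MeasurableSpace K] [NormedAddCommGroup F] [NormedSpace ℝ F]
    (E : EnergyMeasureAssignment F K) (ν : Measure K)
    (hν : IsMinimalEnergyDominant E ν)
    (f : ℕ → F) (hdense : Dense (Submodule.span ℝ (Set.range f) : Set F))
    (Z : ℕ → ℕ → K → ℝ)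
    (hZmeas : ∀ i j, Measurable (Z i j))
    (hZint : ∀ i j, Integrable (Z i j) ν)
    (hZ : ∀ (i j : ℕ) (B : Set K), MeasurableSet B →
      mutualEM E.em (f i) (f j) B = ∫ x in B, Z i j x ∂ν) :
    ∀ᵐ x ∂ν, 1 ≤ ⨆ M : ℕ, ((Matrix.of fun i j : Fin M => Z i j x).rank : ℕ∞) :=
  stmt12_general E ν hν f hdense Z hZmeas hZ
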